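/- arXiv:1703.07372 — 3 statements merged into one kernel-verified Lean document; each statement's English description precedes it below -/
import Mathlib

section
/- For the two-dimensional vector field U(x) = (1/(2π)) (x^⊥/|x|²)(1 − e^{−|x|²/4}) on ℝ² \ {0} (where x^⊥ = (−x₂, x₁)), one has ΔU(x) = (−∂₂G(x), ∂₁G(x)) where G(x) = (1/(4π)) e^{−|x|²/4}. -/
open Real

/-- Partial derivative in direction `i` of a scalar function on `ℝ²`. -/
noncomputable def pd (i : Fin 2) (f : (Fin 2 → ℝ) → ℝ) (x : Fin 2 → ℝ) : ℝ :=
  fderiv ℝ f x (Pi.single i 1)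

/-- `|x|² = x₁² + x₂²`. -/
def nsq (x : Fin 2 → ℝ) : ℝ := x 0 ^ 2 + x 1 ^ 2

/-- First component of `U(x) = (1/(2π)) (x^⊥/|x|²)(1 − e^{−|x|²/4})`. -/
noncomputable def U0 (x : Fin 2 → ℝ) : ℝ :=
  (1 / (2 * π)) * (-(x 1) / nsq x) * (1 - Real.exp (-(nsq x) / 4))

/-- Second component of `U`. -/
noncomputable def U1 (x : Fin 2 → ℝ) : ℝ :=
  (1 / (2 * π)) * (x 0 / nsq x) * (1 - Real.exp (-(nsq x) / 4))

/-- The Gaussian `G(x) = (1/(4π)) e^{−|x|²/4}`. -/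
noncomputable def Gauss (x : Fin 2 → ℝ) : ℝ :=
  (1 / (4 * π)) * Real.exp (-(nsq x) / 4)

/-! Writing `U = x^⊥ h(|x|²)` with `h(r) = (1 - e^{-r/4}) / (2πr)`, a direct computation in
the plane gives `Δ(x_j h(|x|²)) = x_j (8h' + 4rh'')(|x|²) = 4 x_j (rh)''(|x|²)`. Here
`rh = (1 - e^{-r/4}) / (2π)`, so `4(rh)'' = -e^{-r/4} / (8π)`, while
`∂_j G = -x_j e^{-r/4} / (8π)`. -/

open Filter Topology

lemma pd_eq_of_hasFDerivAt {f : (Fin 2 → ℝ) → ℝ} {f' : (Fin 2 → ℝ) →L[ℝ] ℝ} {x : Fin 2 → ℝ}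
    (i : Fin 2) (hf : HasFDerivAt f f' x) : pd i f x = f' (Pi.single i 1) := by
  rw [pd, hf.fderiv]

lemma pd_congr_of_eventuallyEq {f g : (Fin 2 → ℝ) → ℝ} {x : Fin 2 → ℝ} (i : Fin 2)
    (h : f =ᶠ[𝓝 x] g) : pd i f x = pd i g x := by
  rw [pd, pd, h.fderiv_eq]

lemma differentiable_nsq : Differentiable ℝ nsq := by
  unfold nsq; fun_prop

lemma nsq_ne_zero {x : Fin 2 → ℝ} (hx : x ≠ 0) : nsq x ≠ 0 := by
  contrapose! hx
  have h0 : x 0 = 0 := by unfold nsq at hx; nlinarith [sq_nonneg (x 0), sq_nonneg (x 1)]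
  have h1 : x 1 = 0 := by unfold nsq at hx; nlinarith [sq_nonneg (x 0), sq_nonneg (x 1)]
  ext i; fin_cases i <;> assumption

lemma fderiv_nsq_single (x : Fin 2 → ℝ) (i : Fin 2) :
    fderiv ℝ nsq x (Pi.single i 1) = 2 * x i := by
  have hn : HasFDerivAt nsq _ x :=
    ((hasFDerivAt_apply (𝕜 := ℝ) 0 x).pow 2).add ((hasFDerivAt_apply (𝕜 := ℝ) 1 x).pow 2)
  rw [hn.fderiv]
  fin_cases i <;> simp

lemma hasFDerivAt_comp_nsq {h : ℝ → ℝ} {h' : ℝ} {x : Fin 2 → ℝ} (hh : HasDerivAt h h' (nsq x)) :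
    HasFDerivAt (fun y => h (nsq y)) (h' • fderiv ℝ nsq x) x :=
  hh.comp_hasFDerivAt x (differentiable_nsq x).hasFDerivAt

lemma pd_comp_nsq {h : ℝ → ℝ} {h' : ℝ} {x : Fin 2 → ℝ} (i : Fin 2)
    (hh : HasDerivAt h h' (nsq x)) : pd i (fun y => h (nsq y)) x = 2 * x i * h' := by
  rw [pd_eq_of_hasFDerivAt i (hasFDerivAt_comp_nsq hh)]
  simp only [smul_apply, smul_eq_mul, fderiv_nsq_single]
  ring

lemma pd_coord_mul_comp_nsq {h : ℝ → ℝ} {h' : ℝ} {x : Fin 2 → ℝ} (i j : Fin 2)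
    (hh : HasDerivAt h h' (nsq x)) :
    pd i (fun y => y j * h (nsq y)) x
      = (Pi.single i 1 : Fin 2 → ℝ) j * h (nsq x) + 2 * x i * x j * h' := by
  have hf : HasFDerivAt (fun y => y j * h (nsq y)) _ x :=
    (hasFDerivAt_apply j x).mul (hasFDerivAt_comp_nsq hh)
  rw [pd_eq_of_hasFDerivAt i hf]
  simp only [add_apply, smul_apply, ContinuousLinearMap.proj_apply, smul_eq_mul, fderiv_nsq_single]
  ring

lemma pd_pd_coord_mul_comp_nsq {h h' : ℝ → ℝ} {h'' : ℝ} {x : Fin 2 → ℝ} (i j : Fin 2)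
    (hh : ∀ᶠ r in 𝓝 (nsq x), HasDerivAt h (h' r) r) (hh' : HasDerivAt h' h'' (nsq x)) :
    pd i (pd i (fun y => y j * h (nsq y))) x
      = 4 * (Pi.single i 1 : Fin 2 → ℝ) j * x i * h' (nsq x) + 2 * x j * h' (nsq x)
        + 4 * x i ^ 2 * x j * h'' := by
  have hfirst : pd i (fun y => y j * h (nsq y)) =ᶠ[𝓝 x]
      fun y => (Pi.single i 1 : Fin 2 → ℝ) j * h (nsq y) + 2 * y i * y j * h' (nsq y) := by
    filter_upwards [differentiable_nsq.continuous.continuousAt.eventually hh] with y hy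
    exact pd_coord_mul_comp_nsq i j hy
  have hf : HasFDerivAt
      (fun y => (Pi.single i 1 : Fin 2 → ℝ) j * h (nsq y) + 2 * y i * y j * h' (nsq y)) _ x :=
    ((hasFDerivAt_comp_nsq hh.self_of_nhds).const_mul _).add
      ((((hasFDerivAt_apply i x).const_mul 2).mul (hasFDerivAt_apply j x)).mul
        (hasFDerivAt_comp_nsq hh'))
  rw [pd_congr_of_eventuallyEq i hfirst, pd_eq_of_hasFDerivAt i hf]
  simp only [add_apply, smul_apply, ContinuousLinearMap.proj_apply, smul_eq_mul, Pi.mul_apply,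
    fderiv_nsq_single, Pi.single_eq_same]
  ring

lemma laplacian_coord_mul_comp_nsq {h h' : ℝ → ℝ} {h'' : ℝ} {x : Fin 2 → ℝ} (j : Fin 2)
    (hh : ∀ᶠ r in 𝓝 (nsq x), HasDerivAt h (h' r) r) (hh' : HasDerivAt h' h'' (nsq x)) :
    pd 0 (pd 0 (fun y => y j * h (nsq y))) x + pd 1 (pd 1 (fun y => y j * h (nsq y))) x
      = x j * (8 * h' (nsq x) + 4 * nsq x * h'') := by
  rw [pd_pd_coord_mul_comp_nsq 0 j hh hh', pd_pd_coord_mul_comp_nsq 1 j hh hh', nsq]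
  fin_cases j <;>
    simp only [Fin.zero_eta, Fin.mk_one, Pi.single_eq_same, ne_eq, zero_ne_one, one_ne_zero,
      not_false_eq_true, Pi.single_eq_of_ne] <;>
    ring

noncomputable def oseenProfile (r : ℝ) : ℝ := (1 - exp (-r / 4)) / r

noncomputable def oseenProfileDeriv (r : ℝ) : ℝ := (exp (-r / 4) / 4 - oseenProfile r) / r

lemma hasDerivAt_exp_neg_div_four (r : ℝ) :
    HasDerivAt (fun s => exp (-s / 4)) (-(exp (-r / 4) / 4)) r := by
  convert ((hasDerivAt_neg r).div_const 4).exp using 1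
  ring

lemma hasDerivAt_oseenProfile {r : ℝ} (hr : r ≠ 0) :
    HasDerivAt oseenProfile (oseenProfileDeriv r) r := by
  refine (((hasDerivAt_exp_neg_div_four r).const_sub 1).div (hasDerivAt_id r) hr).congr_deriv ?_
  simp only [oseenProfileDeriv, oseenProfile, id]
  field_simp

/-- This is the ODE `(r p)'' = -e^{-r/4} / 16` for `p = oseenProfile`. -/
lemma hasDerivAt_oseenProfileDeriv {r : ℝ} (hr : r ≠ 0) :
    HasDerivAt oseenProfileDeriv (-(exp (-r / 4) / 16 + 2 * oseenProfileDeriv r) / r) r := by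
  refine ((((hasDerivAt_exp_neg_div_four r).div_const 4).sub
    (hasDerivAt_oseenProfile hr)).div (hasDerivAt_id r) hr).congr_deriv ?_
  simp only [oseenProfileDeriv, id, Pi.sub_apply]
  field_simp
  ring

lemma laplacian_coord_mul_oseenProfile {x : Fin 2 → ℝ} (c : ℝ) (j : Fin 2) (hr : nsq x ≠ 0) :
    pd 0 (pd 0 (fun y => y j * (c * oseenProfile (nsq y)))) x
      + pd 1 (pd 1 (fun y => y j * (c * oseenProfile (nsq y)))) x
      = -(c / 4) * x j * exp (-nsq x / 4) := by
  have hh : ∀ᶠ s in 𝓝 (nsq x),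
      HasDerivAt (fun t => c * oseenProfile t) (c * oseenProfileDeriv s) s := by
    filter_upwards [eventually_ne_nhds hr] with s hs
    exact (hasDerivAt_oseenProfile hs).const_mul c
  rw [laplacian_coord_mul_comp_nsq j hh ((hasDerivAt_oseenProfileDeriv hr).const_mul c)]
  field_simp
  ring

lemma U0_eq_coord_mul_oseenProfile :
    U0 = fun y => y 1 * (-(1 / (2 * π)) * oseenProfile (nsq y)) := by
  ext y; simp only [U0, oseenProfile]; ring

lemma U1_eq_coord_mul_oseenProfile : U1 = fun y => y 0 * (1 / (2 * π) * oseenProfile (nsq y)) := by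
  ext y; simp only [U1, oseenProfile]; ring

lemma pd_Gauss (x : Fin 2 → ℝ) (i : Fin 2) :
    pd i Gauss x = -(x i * exp (-nsq x / 4)) / (8 * π) := by
  have hG : Gauss = fun y => 1 / (4 * π) * exp (-nsq y / 4) := rfl
  rw [hG, pd_comp_nsq i ((hasDerivAt_exp_neg_div_four (nsq x)).const_mul (1 / (4 * π)))]
  field_simp
  ring

/-- `ΔU(x) = (−∂₂G(x), ∂₁G(x))` for `x ≠ 0`. -/
theorem laplacian_U_eq (x : Fin 2 → ℝ) (hx : x ≠ 0) :
    pd 0 (pd 0 U0) x + pd 1 (pd 1 U0) x = -(pd 1 Gauss x) ∧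
    pd 0 (pd 0 U1) x + pd 1 (pd 1 U1) x = pd 0 Gauss x := by
  have hr := nsq_ne_zero hx
  constructor
  · rw [U0_eq_coord_mul_oseenProfile, laplacian_coord_mul_oseenProfile _ 1 hr, pd_Gauss]
    field_simp
    ring
  · rw [U1_eq_coord_mul_oseenProfile, laplacian_coord_mul_oseenProfile _ 0 hr, pd_Gauss]
    field_simp
    ring
end

section
/- For fixed x ∈ ℝ² with x ≠ 0, the time integral ∫₀^∞ | (1/(8πt)) e^{−|x|²/(4t)} − (1 − e^{−|x|²/(4t)})/(2π|x|²) | dt is bounded by a constant C independent of x. -/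
/-!
With `u = |x|² / (4t)` one has `|B₀(x,t)| = (1 - (1 + u) e^{-u}) / (2π|x|²)`, and
`0 ≤ 1 - (1 + u) e^{-u} ≤ min(1, u²)` by `1 + v ≤ eᵛ` at `v = ±u`. Hence `|B₀(x,t)|` is bounded
by `1 / (2π|x|²)` and by `|x|² / (32π t²)`; integrating the first bound up to `t = |x|² / 4` and
the second beyond it gives `1 / (4π)`, whatever `x` is.
-/

open Real Set MeasureTheory

lemma integrableOn_Ioi_inv_sq {a : ℝ} (ha : 0 < a) :
    IntegrableOn (fun t : ℝ => (t ^ 2)⁻¹) (Ioi a) :=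
  (integrableOn_Ioi_rpow_of_lt (by norm_num : (-2 : ℝ) < -1) ha).congr_fun
    (fun t ht => by simp [Real.rpow_neg (ha.trans ht).le]) measurableSet_Ioi

lemma integral_Ioi_inv_sq {a : ℝ} (ha : 0 < a) : ∫ t in Ioi a, (t ^ 2)⁻¹ = a⁻¹ := by
  rw [← setIntegral_congr_fun measurableSet_Ioi (f := fun t : ℝ => t ^ (-2 : ℝ))
    (fun t ht => by simp [Real.rpow_neg (ha.trans ht).le]),
    integral_Ioi_rpow_of_lt (by norm_num) ha]
  norm_num [Real.rpow_neg_one]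

lemma setIntegral_Ioi_zero_le_of_le_of_le_div_sq {f : ℝ → ℝ} {a A B : ℝ} (ha : 0 < a)
    (hf : Measurable f) (hf₀ : ∀ t, 0 < t → 0 ≤ f t) (hA : ∀ t ∈ Ioc 0 a, f t ≤ A)
    (hB : ∀ t ∈ Ioi a, f t ≤ B / t ^ 2) :
    ∫ t in Ioi 0, f t ≤ a * A + B / a := by
  have dominated {s : Set ℝ} {g : ℝ → ℝ} (hs : MeasurableSet s) (hg : IntegrableOn g s volume)
      (hpos : s ⊆ Ioi 0) (hfg : ∀ t ∈ s, f t ≤ g t) : IntegrableOn f s :=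
    hg.mono' hf.aestronglyMeasurable <| (ae_restrict_iff' hs).2 <| .of_forall fun t ht => by
      rw [Real.norm_of_nonneg (hf₀ t (hpos ht))]; exact hfg t ht
  have hAint : IntegrableOn (fun _ => A) (Ioc 0 a) := integrableOn_const measure_Ioc_lt_top.ne
  have hBint : IntegrableOn (fun t : ℝ => B / t ^ 2) (Ioi a) := by
    simp_rw [div_eq_mul_inv]
    exact (integrableOn_Ioi_inv_sq ha).const_mul B
  have hfA := dominated measurableSet_Ioc hAint Ioc_subset_Ioi_self hA
  have hfB := dominated measurableSet_Ioi hBint (Ioi_subset_Ioi ha.le) hB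
  calc ∫ t in Ioi 0, f t = (∫ t in Ioc 0 a, f t) + ∫ t in Ioi a, f t := by
        rw [← Ioc_union_Ioi_eq_Ioi ha.le, setIntegral_union (Ioc_disjoint_Ioi le_rfl)
          measurableSet_Ioi hfA hfB]
    _ ≤ (∫ _ in Ioc 0 a, A) + ∫ t in Ioi a, B / t ^ 2 :=
        add_le_add (setIntegral_mono_on hfA hAint measurableSet_Ioc hA)
          (setIntegral_mono_on hfB hBint measurableSet_Ioi hB)
    _ = a * A + B / a := by
        simp only [div_eq_mul_inv, integral_const_mul, integral_Ioi_inv_sq ha, setIntegral_const,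
          Real.volume_real_Ioc, sub_zero, max_eq_left ha.le, smul_eq_mul]

lemma one_add_mul_exp_neg_le_one (u : ℝ) : (1 + u) * exp (-u) ≤ 1 := by
  have := add_one_le_exp u
  calc (1 + u) * exp (-u) ≤ exp u * exp (-u) := by gcongr; linarith
    _ = 1 := by rw [← exp_add, add_neg_cancel, exp_zero]

lemma one_sub_sq_le_one_add_mul_exp_neg {u : ℝ} (hu : -1 ≤ u) : 1 - u ^ 2 ≤ (1 + u) * exp (-u) :=
  calc 1 - u ^ 2 = (1 + u) * (-u + 1) := by ring
    _ ≤ (1 + u) * exp (-u) := by gcongr; linarith; exact add_one_le_exp _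

section
variable {E : Type*} [NormedAddCommGroup E]

noncomputable def B₀ (x : E) (t : ℝ) : ℝ :=
  1 / (8 * π * t) * exp (-‖x‖ ^ 2 / (4 * t)) - (1 - exp (-‖x‖ ^ 2 / (4 * t))) / (2 * π * ‖x‖ ^ 2)

lemma measurable_B₀ (x : E) : Measurable (B₀ x) := by unfold B₀; fun_prop

lemma abs_B₀_eq {x : E} (hx : x ≠ 0) {t : ℝ} (ht : 0 < t) :
    |B₀ x t| = (1 - (1 + ‖x‖ ^ 2 / (4 * t)) * exp (-(‖x‖ ^ 2 / (4 * t)))) / (2 * π * ‖x‖ ^ 2) := by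
  have hx' : 0 < ‖x‖ := norm_pos_iff.2 hx
  have hB : -B₀ x t = (1 - (1 + ‖x‖ ^ 2 / (4 * t)) * exp (-(‖x‖ ^ 2 / (4 * t)))) /
      (2 * π * ‖x‖ ^ 2) := by
    rw [B₀, neg_div]
    field_simp
    ring
  rw [← abs_neg, hB]
  exact abs_of_nonneg (div_nonneg (sub_nonneg.2 (one_add_mul_exp_neg_le_one _)) (by positivity))

lemma abs_B₀_le_inv {x : E} (hx : x ≠ 0) {t : ℝ} (ht : 0 < t) :
    |B₀ x t| ≤ 1 / (2 * π * ‖x‖ ^ 2) := by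
  have hx' : 0 < ‖x‖ := norm_pos_iff.2 hx
  rw [abs_B₀_eq hx ht]
  gcongr
  exact sub_le_self _ (by positivity)

lemma abs_B₀_le_div_sq {x : E} (hx : x ≠ 0) {t : ℝ} (ht : 0 < t) :
    |B₀ x t| ≤ ‖x‖ ^ 2 / (32 * π) / t ^ 2 := by
  have hx' : 0 < ‖x‖ := norm_pos_iff.2 hx
  have hu : -1 ≤ ‖x‖ ^ 2 / (4 * t) := by linarith [show 0 ≤ ‖x‖ ^ 2 / (4 * t) by positivity]
  calc |B₀ x t| ≤ (‖x‖ ^ 2 / (4 * t)) ^ 2 / (2 * π * ‖x‖ ^ 2) := by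
        rw [abs_B₀_eq hx ht]
        gcongr
        linarith [one_sub_sq_le_one_add_mul_exp_neg hu]
    _ = ‖x‖ ^ 2 / (32 * π) / t ^ 2 := by field_simp; ring
end

/-- For `x ≠ 0`, `∫₀^∞ |(1/(8πt)) e^{−|x|²/(4t)} − (1 − e^{−|x|²/(4t)})/(2π|x|²)| dt ≤ C`
with `C` an absolute constant independent of `x`. -/
theorem time_integral_B_bounded :
    ∃ C : ℝ, 0 < C ∧ ∀ x : EuclideanSpace ℝ (Fin 2), x ≠ 0 →
      ∫ t in Set.Ioi (0 : ℝ),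
        |1 / (8 * π * t) * Real.exp (-‖x‖ ^ 2 / (4 * t))
          - (1 - Real.exp (-‖x‖ ^ 2 / (4 * t))) / (2 * π * ‖x‖ ^ 2)| ≤ C := by
  refine ⟨1 / (4 * π), by positivity, fun x hx => ?_⟩
  have hx' : 0 < ‖x‖ := norm_pos_iff.2 hx
  -- Splitting at `t = ‖x‖² / 4` makes both pieces equal to `1 / (8π)`.
  calc ∫ t in Ioi 0, |B₀ x t|
      ≤ ‖x‖ ^ 2 / 4 * (1 / (2 * π * ‖x‖ ^ 2)) + ‖x‖ ^ 2 / (32 * π) / (‖x‖ ^ 2 / 4) :=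
        setIntegral_Ioi_zero_le_of_le_of_le_div_sq (by positivity) (measurable_B₀ x).abs
          (fun _ _ => abs_nonneg _) (fun _ ht => abs_B₀_le_inv hx ht.1)
          (fun _ ht => abs_B₀_le_div_sq hx ((by positivity : (0 : ℝ) < ‖x‖ ^ 2 / 4).trans ht))
    _ = 1 / (4 * π) := by field_simp; ring
end

section
/- There exists a constant C > 0 depending only on r ∈ [0,1) such that for all x ∈ ℝ² with |x| ≥ 1, ∫_{|z| ≥ |x|/2} |x − z|^{−1}(1 + |z|)^{−2−r} dz ≤ C (1 + |x|)^{−1−r}. -/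
/-!
Split `{z | ‖x‖ / 2 ≤ ‖z‖}` along the disc `‖x - z‖ < ‖x‖ / 2`. On the disc the weight is at most
`(1 + ‖x‖ / 2) ^ (-2 - r)`, and `‖x - z‖⁻¹` integrates over a planar disc of radius `ρ` to a
multiple of `ρ`. Off the disc `‖z‖ ≤ 3 ‖x - z‖`, so the integrand is at most
`3 ‖z‖⁻¹ (1 + ‖z‖) ^ (-2 - r)`; in polar coordinates the planar area element `ρ dρ` cancels
`‖z‖⁻¹`, leaving `∫_{‖x‖/2}^∞ (1 + ρ) ^ (-2 - r) dρ`. Both pieces are `O((1 + ‖x‖ / 2) ^ (-1 - r))`.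
-/

open Real Set MeasureTheory Metric
open scoped ENNReal

theorem inv_norm_sub_le_three_mul_inv_norm {G : Type*} [SeminormedAddCommGroup G] {x z : G}
    (hz : ‖x‖ / 2 ≤ ‖z‖) (hxz : ‖x‖ / 2 ≤ ‖x - z‖) : ‖x - z‖⁻¹ ≤ 3 * ‖z‖⁻¹ := by
  have htri : ‖z‖ ≤ ‖x‖ + ‖x - z‖ := by simpa using norm_sub_le x (x - z)
  rcases (norm_nonneg z).eq_or_lt with hz0 | hz0
  · have : ‖x - z‖ = 0 := by linarith [norm_sub_le x z, norm_nonneg (x - z)]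
    simp [this]
  · calc ‖x - z‖⁻¹ ≤ (‖z‖ / 3)⁻¹ := inv_anti₀ (by positivity) (by linarith)
      _ = 3 * ‖z‖⁻¹ := by rw [inv_div, div_eq_mul_inv]

theorem one_add_div_two_rpow_le {t q : ℝ} (ht : 0 ≤ t) (hq : q ≤ 0) :
    (1 + t / 2) ^ q ≤ 2 ^ (-q) * (1 + t) ^ q := by
  calc (1 + t / 2) ^ q ≤ ((1 + t) / 2) ^ q :=
        rpow_le_rpow_of_nonpos (by positivity) (by linarith) hq
    _ = 2 ^ (-q) * (1 + t) ^ q := by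
        rw [div_rpow (by positivity) (by norm_num), rpow_neg (by norm_num), div_eq_inv_mul]

namespace MeasureTheory

variable {E : Type*} [NormedAddCommGroup E] [NormedSpace ℝ E] [FiniteDimensional ℝ E]
  [MeasurableSpace E] [BorelSpace E] (μ : Measure E) [μ.IsAddHaarMeasure]

theorem lintegral_fun_norm_addHaar [Nontrivial E] {f : ℝ → ℝ≥0∞} (hf : Measurable f) :
    ∫⁻ x, f ‖x‖ ∂μ = μ.toSphere univ *
      ∫⁻ y in Ioi (0 : ℝ), ENNReal.ofReal (y ^ (Module.finrank ℝ E - 1)) * f y := by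
  have hf' : Measurable fun p : sphere (0 : E) 1 × Ioi (0 : ℝ) ↦ f p.2 :=
    hf.comp (measurable_subtype_coe.comp measurable_snd)
  calc ∫⁻ x, f ‖x‖ ∂μ = ∫⁻ x : ({0}ᶜ : Set E), f ‖(x : E)‖ ∂(μ.comap Subtype.val) := by
        rw [lintegral_subtype_comap (measurableSet_singleton 0).compl (fun x ↦ f ‖x‖),
          restrict_compl_singleton]
    _ = ∫⁻ p, f p.2 ∂(μ.toSphere.prod (.volumeIoiPow (Module.finrank ℝ E - 1))) := by
        simpa using (μ.measurePreserving_homeomorphUnitSphereProd.lintegral_comp hf')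
    _ = μ.toSphere univ * ∫⁻ y, f y ∂(.volumeIoiPow (Module.finrank ℝ E - 1)) := by
        rw [lintegral_prod _ hf'.aemeasurable]
        dsimp only
        rw [lintegral_const, mul_comm]
    _ = _ := by
        rw [Measure.volumeIoiPow, lintegral_withDensity_eq_lintegral_mul _ (by fun_prop)
          (g := fun y : Ioi (0 : ℝ) ↦ f y) (hf.comp measurable_subtype_coe)]
        simp only [Pi.mul_apply]
        rw [lintegral_subtype_comap measurableSet_Ioi
          (fun y ↦ ENNReal.ofReal (y ^ (Module.finrank ℝ E - 1)) * f y)]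

theorem setLIntegral_preimage_norm_inv_norm_mul (hE : Module.finrank ℝ E = 2) {s : Set ℝ}
    (hs : MeasurableSet s) {f : ℝ → ℝ≥0∞} (hf : Measurable f) :
    ∫⁻ x in (‖·‖) ⁻¹' s, ENNReal.ofReal ‖x‖⁻¹ * f ‖x‖ ∂μ =
      μ.toSphere univ * ∫⁻ y in s ∩ Ioi 0, f y := by
  have : Nontrivial E := Module.nontrivial_of_finrank_eq_succ hE
  let g : ℝ → ℝ≥0∞ := s.indicator fun y ↦ ENNReal.ofReal y⁻¹ * f y
  calc ∫⁻ x in (‖·‖) ⁻¹' s, ENNReal.ofReal ‖x‖⁻¹ * f ‖x‖ ∂μ = ∫⁻ x, g ‖x‖ ∂μ := by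
        rw [← lintegral_indicator (measurable_norm hs)]
        exact lintegral_congr fun x ↦
          indicator_comp_right (‖·‖) (g := fun y ↦ ENNReal.ofReal y⁻¹ * f y)
    _ = μ.toSphere univ * ∫⁻ y in Ioi 0, ENNReal.ofReal y * g y := by
        rw [lintegral_fun_norm_addHaar μ
          ((by fun_prop : Measurable fun y : ℝ ↦ ENNReal.ofReal y⁻¹ * f y).indicator hs)]
        norm_num only [hE, pow_one, g]
    _ = μ.toSphere univ * ∫⁻ y in s ∩ Ioi 0, f y := by
      rw [← Measure.restrict_restrict hs, ← lintegral_indicator hs]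
      congr 1
      refine setLIntegral_congr_fun measurableSet_Ioi fun y (hy : 0 < y) ↦ ?_
      by_cases hys : y ∈ s
      · simp only [g, indicator_of_mem hys]
        rw [← mul_assoc, ← ENNReal.ofReal_mul hy.le,
          mul_inv_cancel₀ hy.ne', ENNReal.ofReal_one, one_mul]
      · simp [g, hys]

theorem setLIntegral_ball_inv_norm_sub (hE : Module.finrank ℝ E = 2) (x : E) (R : ℝ) :
    ∫⁻ z in ball x R, ENNReal.ofReal ‖x - z‖⁻¹ ∂μ = μ.toSphere univ * ENNReal.ofReal R := by
  have hball : (x - ·) ⁻¹' ((‖·‖) ⁻¹' Iio R) = ball x R := by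
    ext z; simp [dist_eq_norm']
  have h :=
    setLIntegral_preimage_norm_inv_norm_mul μ hE (measurableSet_Iio (a := R)) measurable_one
  simp only [Pi.one_apply, mul_one, setLIntegral_one, Iio_inter_Ioi, Real.volume_Ioo,
    sub_zero] at h
  rw [← h, ← hball]
  exact (μ.measurePreserving_sub_left x).setLIntegral_comp_preimage
    (measurable_norm measurableSet_Iio) (f := fun w ↦ ENNReal.ofReal ‖w‖⁻¹) (by fun_prop)

theorem lintegral_Ioi_one_add_rpow {a R : ℝ} (ha : a < -1) (hR : -1 < R) :
    ∫⁻ y in Ioi R, ENNReal.ofReal ((1 + y) ^ a) =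
      ENNReal.ofReal (-(1 + R) ^ (a + 1) / (a + 1)) := by
  have h := (measurePreserving_add_left volume (1 : ℝ)).setLIntegral_comp_preimage
    measurableSet_Ioi (by fun_prop : Measurable fun y : ℝ ↦ ENNReal.ofReal (y ^ a))
    (s := Ioi (1 + R))
  rw [preimage_const_add_Ioi, add_sub_cancel_left] at h
  have h1R : 0 < 1 + R := by linarith
  rw [h, ← ofReal_integral_eq_lintegral_ofReal (integrableOn_Ioi_rpow_of_lt ha h1R),
    integral_Ioi_rpow_of_lt ha h1R]
  filter_upwards [ae_restrict_mem measurableSet_Ioi] with y (hy : 1 + R < y)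
  exact rpow_nonneg (by linarith) a

theorem setLIntegral_inv_norm_mul_one_add_norm_rpow (hE : Module.finrank ℝ E = 2) {a R : ℝ}
    (ha : a < -1) (hR : 0 ≤ R) :
    ∫⁻ x in {x : E | R ≤ ‖x‖}, ENNReal.ofReal (‖x‖⁻¹ * (1 + ‖x‖) ^ a) ∂μ =
      μ.toSphere univ * ENNReal.ofReal (-(1 + R) ^ (a + 1) / (a + 1)) := by
  have hIci : (Ici R ∩ Ioi 0 : Set ℝ) =ᵐ[volume] Ioi R := by
    refine (Filter.EventuallyEq.rfl.inter Ioi_ae_eq_Ici).trans ?_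
    rw [Ici_inter_Ici, max_eq_left hR]
    exact Ioi_ae_eq_Ici.symm
  simp_rw [ENNReal.ofReal_mul (inv_nonneg.2 (norm_nonneg _))]
  rw [← lintegral_Ioi_one_add_rpow ha (by linarith), ← Measure.restrict_congr_set hIci]
  exact setLIntegral_preimage_norm_inv_norm_mul μ hE measurableSet_Ici
    (f := fun y ↦ ENNReal.ofReal ((1 + y) ^ a)) (by fun_prop)

theorem setLIntegral_inter_ball_inv_norm_sub_mul_rpow_le (hE : Module.finrank ℝ E = 2) {p : ℝ}
    (hp : p ≤ 0) (x : E) :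
    ∫⁻ z in {z : E | ‖x‖ / 2 ≤ ‖z‖} ∩ ball x (‖x‖ / 2),
        ENNReal.ofReal (‖x - z‖⁻¹ * (1 + ‖z‖) ^ p) ∂μ ≤
      μ.toSphere univ * ENNReal.ofReal ((1 + ‖x‖ / 2) ^ (p + 1)) := by
  have hpt : ∀ z ∈ {z : E | ‖x‖ / 2 ≤ ‖z‖} ∩ ball x (‖x‖ / 2),
      ENNReal.ofReal (‖x - z‖⁻¹ * (1 + ‖z‖) ^ p) ≤
        ENNReal.ofReal ((1 + ‖x‖ / 2) ^ p) * ENNReal.ofReal ‖x - z‖⁻¹ := by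
    rintro z ⟨hz, -⟩
    rw [← ENNReal.ofReal_mul (by positivity), mul_comm ((1 + ‖x‖ / 2) ^ p)]
    refine ENNReal.ofReal_le_ofReal (mul_le_mul_of_nonneg_left ?_ (by positivity))
    exact rpow_le_rpow_of_nonpos (by positivity) (by linarith [hz.out]) hp
  calc _ ≤ ∫⁻ z in ball x (‖x‖ / 2),
          ENNReal.ofReal ((1 + ‖x‖ / 2) ^ p) * ENNReal.ofReal ‖x - z‖⁻¹ ∂μ :=
        (setLIntegral_mono (by fun_prop) hpt).trans (lintegral_mono_set inter_subset_right)
    _ = μ.toSphere univ * ENNReal.ofReal ((1 + ‖x‖ / 2) ^ p * (‖x‖ / 2)) := by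
        rw [lintegral_const_mul _ (by fun_prop : Measurable fun z : E ↦ ENNReal.ofReal ‖x - z‖⁻¹),
          setLIntegral_ball_inv_norm_sub μ hE,
          ENNReal.ofReal_mul (by positivity)]
        ring
    _ ≤ μ.toSphere univ * ENNReal.ofReal ((1 + ‖x‖ / 2) ^ (p + 1)) := by
        rw [rpow_add_one (by positivity : (0 : ℝ) < 1 + ‖x‖ / 2).ne']
        gcongr
        linarith

theorem setLIntegral_diff_ball_inv_norm_sub_mul_rpow_le (hE : Module.finrank ℝ E = 2) {p : ℝ}
    (hp : p < -1) (x : E) :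
    ∫⁻ z in {z : E | ‖x‖ / 2 ≤ ‖z‖} \ ball x (‖x‖ / 2),
        ENNReal.ofReal (‖x - z‖⁻¹ * (1 + ‖z‖) ^ p) ∂μ ≤
      μ.toSphere univ * ENNReal.ofReal (-3 * (1 + ‖x‖ / 2) ^ (p + 1) / (p + 1)) := by
  have hpt : ∀ z ∈ {z : E | ‖x‖ / 2 ≤ ‖z‖} \ ball x (‖x‖ / 2),
      ENNReal.ofReal (‖x - z‖⁻¹ * (1 + ‖z‖) ^ p) ≤
        ENNReal.ofReal 3 * ENNReal.ofReal (‖z‖⁻¹ * (1 + ‖z‖) ^ p) := by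
    rintro z ⟨hz, hzx⟩
    rw [mem_ball, dist_eq_norm', not_lt] at hzx
    rw [← ENNReal.ofReal_mul (by norm_num), ← mul_assoc]
    gcongr
    exact inv_norm_sub_le_three_mul_inv_norm hz hzx
  calc _ ≤ ∫⁻ z in {z : E | ‖x‖ / 2 ≤ ‖z‖},
          ENNReal.ofReal 3 * ENNReal.ofReal (‖z‖⁻¹ * (1 + ‖z‖) ^ p) ∂μ :=
        (setLIntegral_mono (by fun_prop) hpt).trans (lintegral_mono_set sdiff_subset)
    _ = μ.toSphere univ * ENNReal.ofReal (-3 * (1 + ‖x‖ / 2) ^ (p + 1) / (p + 1)) := by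
        rw [lintegral_const_mul _ (by fun_prop),
          setLIntegral_inv_norm_mul_one_add_norm_rpow μ hE hp (by positivity),
          mul_left_comm, ← ENNReal.ofReal_mul (by norm_num)]
        congr 2
        ring

theorem setLIntegral_inv_norm_sub_mul_one_add_norm_rpow_le (hE : Module.finrank ℝ E = 2)
    {p : ℝ} (hp : p < -1) (x : E) :
    ∫⁻ z in {z : E | ‖x‖ / 2 ≤ ‖z‖}, ENNReal.ofReal (‖x - z‖⁻¹ * (1 + ‖z‖) ^ p) ∂μ ≤
      μ.toSphere univ * ENNReal.ofReal ((1 - 3 / (p + 1)) * (1 + ‖x‖ / 2) ^ (p + 1)) := by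
  have hfar_nonneg : 0 ≤ -3 * (1 + ‖x‖ / 2) ^ (p + 1) / (p + 1) :=
    div_nonneg_of_nonpos
      (by nlinarith [rpow_nonneg (by positivity : (0 : ℝ) ≤ 1 + ‖x‖ / 2) (p + 1)]) (by linarith)
  rw [← lintegral_inter_add_sdiff _ _ (measurableSet_ball (x := x) (ε := ‖x‖ / 2))]
  calc _ ≤ μ.toSphere univ * ENNReal.ofReal ((1 + ‖x‖ / 2) ^ (p + 1)) +
        μ.toSphere univ * ENNReal.ofReal (-3 * (1 + ‖x‖ / 2) ^ (p + 1) / (p + 1)) :=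
        add_le_add (setLIntegral_inter_ball_inv_norm_sub_mul_rpow_le μ hE (by linarith) x)
          (setLIntegral_diff_ball_inv_norm_sub_mul_rpow_le μ hE hp x)
    _ = _ := by
        rw [← mul_add, ← ENNReal.ofReal_add (by positivity) hfar_nonneg]
        congr 2
        ring

end MeasureTheory

theorem weighted_convolution_estimate_general (r : ℝ) (hr0 : 0 ≤ r) :
    ∃ C : ℝ, 0 < C ∧ ∀ x : EuclideanSpace ℝ (Fin 2), 1 ≤ ‖x‖ →
      ∫ z in {z : EuclideanSpace ℝ (Fin 2) | ‖x‖ / 2 ≤ ‖z‖},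
          ‖x - z‖⁻¹ * (1 + ‖z‖) ^ (-2 - r)
        ≤ C * (1 + ‖x‖) ^ (-1 - r) := by
  set κ := (volume : Measure (EuclideanSpace ℝ (Fin 2))).toSphere.real univ
  have : NeZero (volume : Measure (EuclideanSpace ℝ (Fin 2))).toSphere :=
    ⟨Measure.toSphere_ne_zero _⟩
  have hκ : 0 < κ := measureReal_univ_pos
  refine ⟨κ * (1 + 3 / (1 + r)) * 2 ^ (1 + r), by positivity, fun x _ ↦ ?_⟩
  have hest := setLIntegral_inv_norm_sub_mul_one_add_norm_rpow_le volume
    finrank_euclideanSpace_fin (p := -2 - r) (by linarith) x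
  rw [show -2 - r + 1 = -1 - r by ring, show 1 - 3 / (-1 - r) = 1 + 3 / (1 + r) by
      rw [show -1 - r = -(1 + r) by ring, div_neg, sub_neg_eq_add],
    ← ENNReal.ofReal_toReal (measure_ne_top _ univ), ← ENNReal.ofReal_mul ENNReal.toReal_nonneg]
    at hest
  rw [integral_eq_lintegral_of_nonneg_ae (ae_of_all _ fun z ↦ by positivity) (by fun_prop)]
  refine ENNReal.toReal_le_of_le_ofReal (by positivity)
    (hest.trans (ENNReal.ofReal_le_ofReal ?_))
  calc κ * ((1 + 3 / (1 + r)) * (1 + ‖x‖ / 2) ^ (-1 - r))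
      ≤ κ * ((1 + 3 / (1 + r)) * (2 ^ (-(-1 - r)) * (1 + ‖x‖) ^ (-1 - r))) := by
        gcongr
        exact one_add_div_two_rpow_le (norm_nonneg x) (by linarith)
    _ = κ * (1 + 3 / (1 + r)) * 2 ^ (1 + r) * (1 + ‖x‖) ^ (-1 - r) := by
        rw [show -(-1 - r) = 1 + r by ring]; ring

/-- Weighted convolution estimate: for `r ∈ [0,1)` there is `C = C(r) > 0` such that
for all `|x| ≥ 1`, `∫_{|z| ≥ |x|/2} |x−z|⁻¹ (1+|z|)^{−2−r} dz ≤ C (1+|x|)^{−1−r}`. -/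
theorem weighted_convolution_estimate (r : ℝ) (hr0 : 0 ≤ r) (hr1 : r < 1) :
    ∃ C : ℝ, 0 < C ∧ ∀ x : EuclideanSpace ℝ (Fin 2), 1 ≤ ‖x‖ →
      ∫ z in {z : EuclideanSpace ℝ (Fin 2) | ‖x‖ / 2 ≤ ‖z‖},
          ‖x - z‖⁻¹ * (1 + ‖z‖) ^ (-2 - r)
        ≤ C * (1 + ‖x‖) ^ (-1 - r) :=
  weighted_convolution_estimate_general r hr0
end
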